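/- arXiv:1310.0546 — 4 statements merged into one kernel-verified Lean document; each statement's English description precedes it below -/
import Mathlib

section
/- The map sending s_1 to σ_n and s_i (for i ≥ 2) to σ_{n+i-1}·σ_{n-i+1} extends to a group homomorphism Ψ from the Artin group A(B_n) to the braid group B_{2n}, i.e., the images of the generators satisfy all the defining relations of A(B_n). -/
/-- Braid relations on `m` generators `σ_1,…,σ_m` (generator `i : Fin m` is `σ_{i+1}`). -/
def braidRels (m : ℕ) : Set (FreeGroup (Fin m)) :=
  {r | (∃ i j : Fin m, (i : ℕ) + 1 = (j : ℕ) ∧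
      r = .of i * .of j * .of i * (.of j * .of i * .of j)⁻¹) ∨
    (∃ i j : Fin m, (i : ℕ) + 2 ≤ (j : ℕ) ∧
      r = .of i * .of j * (.of j * .of i)⁻¹)}

/-- The braid group on `m+1` strands, with `m` Artin generators. -/
abbrev BraidGroup (m : ℕ) := PresentedGroup (braidRels m)

/-- The Artin generator `σ_k` (`1 ≤ k ≤ m`) of the braid group. -/
noncomputable def σ {m : ℕ} (k : ℕ) : BraidGroup m :=
  if h : 1 ≤ k ∧ k ≤ m then PresentedGroup.of (⟨k - 1, by omega⟩ : Fin m) else 1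

/-- Type `B_n` Artin relations on generators `s_1,…,s_n` (generator `i : Fin n` is `s_{i+1}`). -/
def typeBRels (n : ℕ) : Set (FreeGroup (Fin n)) :=
  {r | (∃ i j : Fin n, (i : ℕ) = 0 ∧ (j : ℕ) = 1 ∧
      r = .of i * .of j * .of i * .of j * (.of j * .of i * .of j * .of i)⁻¹) ∨
    (∃ i j : Fin n, 1 ≤ (i : ℕ) ∧ (i : ℕ) + 1 = (j : ℕ) ∧
      r = .of i * .of j * .of i * (.of j * .of i * .of j)⁻¹) ∨
    (∃ i j : Fin n, (i : ℕ) + 2 ≤ (j : ℕ) ∧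
      r = .of i * .of j * (.of j * .of i)⁻¹)}

/-- The Artin group of type `B_n`. -/
abbrev ArtinB (n : ℕ) := PresentedGroup (typeBRels n)

/-- The standard generator `s_k` (`1 ≤ k ≤ n`) of `A(B_n)`. -/
noncomputable def s {n : ℕ} (k : ℕ) : ArtinB n :=
  if h : 1 ≤ k ∧ k ≤ n then PresentedGroup.of (⟨k - 1, by omega⟩ : Fin n) else 1

/-!
Each `s_i` with `i ≥ 2` goes to a product of two commuting generators placed symmetrically
around `σ_n`, so the type `A` relations among the `s_i` hold factorwise: far-apart pairs have
far-apart indices, and neighbouring pairs braid because two commuting braiding pairs do.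
The relation `s_1 s_2 s_1 s_2 = s_2 s_1 s_2 s_1` is a consequence of the braid relations of
the path `σ_{n-1} — σ_n — σ_{n+1}` together with the commutation of its two ends.
-/

lemma σ_braid {m i j : ℕ} (hi : 1 ≤ i := by omega) (hij : i + 1 = j := by omega)
    (hjm : j ≤ m := by omega) :
    σ (m := m) i * σ j * σ i = σ j * σ i * σ j := by
  rw [σ, σ, dif_pos (by omega), dif_pos (by omega)]
  exact PresentedGroup.mk_eq_mk_of_mul_inv_mem (rels := braidRels m)
    (Or.inl ⟨⟨i - 1, by omega⟩, ⟨j - 1, by omega⟩, by simp; omega, rfl⟩)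

lemma commute_σ_of_lt {m i j : ℕ} (hi : 1 ≤ i) (hij : i + 2 ≤ j) (hjm : j ≤ m) :
    Commute (σ (m := m) i) (σ j) := by
  rw [σ, σ, dif_pos (by omega), dif_pos (by omega)]
  exact PresentedGroup.mk_eq_mk_of_mul_inv_mem (rels := braidRels m)
    (Or.inr ⟨⟨i - 1, by omega⟩, ⟨j - 1, by omega⟩, by simp; omega, rfl⟩)

lemma commute_σ {m i j : ℕ} (hi : 1 ≤ i := by omega) (hj : 1 ≤ j := by omega)
    (him : i ≤ m := by omega) (hjm : j ≤ m := by omega)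
    (hij : i + 2 ≤ j ∨ j + 2 ≤ i := by omega) : Commute (σ (m := m) i) (σ j) := by
  rcases hij with hij | hji
  · exact commute_σ_of_lt hi hij hjm
  · exact (commute_σ_of_lt hj hji him).symm

section BraidIdentities

variable {G : Type*} [Group G]

theorem braid_four_of_braid_path {a b c : G} (hab : a * b * a = b * a * b)
    (hbc : b * c * b = c * b * c) (hac : Commute a c) :
    b * (c * a) * b * (c * a) = c * a * b * (c * a) * b :=
  calc b * (c * a) * b * (c * a)
      = b * c * a * b * (c * a) := by group
    _ = b * c * (a * b * a) * c := by rw [← hac.eq]; group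
    _ = (b * c * b) * a * b * c := by rw [hab]; group
    _ = c * b * (c * a) * b * c := by rw [hbc]; group
    _ = c * b * a * (c * b * c) := by rw [← hac.eq]; group
    _ = c * (b * a * b) * c * b := by rw [← hbc]; group
    _ = c * a * b * (a * c) * b := by rw [← hab]; group
    _ = c * a * b * (c * a) * b := by rw [hac.eq]

theorem braid_mul_of_commute {a b c d : G} (hab : a * b * a = b * a * b)
    (hcd : c * d * c = d * c * d) (hac : Commute a c) (had : Commute a d)
    (hbc : Commute b c) (hbd : Commute b d) :
    c * b * (d * a) * (c * b) = d * a * (c * b) * (d * a) :=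
  calc c * b * (d * a) * (c * b)
      = c * (b * d) * (a * c) * b := by group
    _ = c * d * (b * c) * a * b := by rw [hbd.eq, hac.eq]; group
    _ = (c * d * c) * (b * a * b) := by rw [hbc.eq]; group
    _ = d * c * (d * a) * b * a := by rw [hcd, ← hab]; group
    _ = d * (c * a) * (d * b) * a := by rw [← had.eq]; group
    _ = d * a * (c * b) * (d * a) := by rw [← hac.eq, ← hbd.eq]; group

end BraidIdentities

/-- `psiGen n i` is the image of `s_{i+1}`, so for `i ≥ 1` the paper's
`σ_{n+(i+1)-1} σ_{n-(i+1)+1}` becomes `σ_{n+i} σ_{n-i}`. -/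
noncomputable def psiGen (n : ℕ) (i : Fin n) : BraidGroup (2 * n) :=
  if (i : ℕ) = 0 then σ n else σ (n + i) * σ (n - i)

lemma psiGen_of_eq_zero {n : ℕ} {i : Fin n} (hi : (i : ℕ) = 0) : psiGen n i = σ n :=
  if_pos hi

lemma psiGen_of_ne_zero {n : ℕ} {i : Fin n} (hi : (i : ℕ) ≠ 0) :
    psiGen n i = σ (n + i) * σ (n - i) :=
  if_neg hi

lemma psiGen_braid_four {n : ℕ} {i j : Fin n} (hi : (i : ℕ) = 0) (hj : (j : ℕ) = 1) :
    psiGen n i * psiGen n j * psiGen n i * psiGen n j =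
      psiGen n j * psiGen n i * psiGen n j * psiGen n i := by
  rw [psiGen_of_eq_zero hi, psiGen_of_ne_zero (by omega), hj]
  exact braid_four_of_braid_path σ_braid σ_braid commute_σ

lemma psiGen_braid {n : ℕ} {i j : Fin n} (hi : 1 ≤ (i : ℕ)) (hij : (i : ℕ) + 1 = j) :
    psiGen n i * psiGen n j * psiGen n i = psiGen n j * psiGen n i * psiGen n j := by
  rw [psiGen_of_ne_zero (by omega), psiGen_of_ne_zero (by omega)]
  exact braid_mul_of_commute σ_braid σ_braid commute_σ commute_σ commute_σ commute_σ

lemma commute_psiGen {n : ℕ} {i j : Fin n} (hij : (i : ℕ) + 2 ≤ j) :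
    Commute (psiGen n i) (psiGen n j) := by
  rw [psiGen_of_ne_zero (i := j) (by omega)]
  by_cases hi : (i : ℕ) = 0
  · rw [psiGen_of_eq_zero hi]
    exact .mul_right commute_σ commute_σ
  · rw [psiGen_of_ne_zero hi]
    refine .mul_left (.mul_right ?_ ?_) (.mul_right ?_ ?_) <;>
      exact commute_σ

lemma lift_psiGen_eq_one (n : ℕ) : ∀ r ∈ typeBRels n, FreeGroup.lift (psiGen n) r = 1 := by
  rintro r (⟨i, j, hi, hj, rfl⟩ | ⟨i, j, hi, hij, rfl⟩ | ⟨i, j, hij, rfl⟩) <;>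
    simp only [map_mul, map_inv, FreeGroup.lift_apply_of, mul_inv_eq_one]
  · exact psiGen_braid_four hi hj
  · exact psiGen_braid hi hij
  · exact commute_psiGen hij

noncomputable def psi (n : ℕ) : ArtinB n →* BraidGroup (2 * n) :=
  PresentedGroup.toGroup (lift_psiGen_eq_one n)

lemma psi_s_one {n : ℕ} (hn : 1 ≤ n) : psi n (s 1) = σ n := by
  rw [s, dif_pos ⟨le_rfl, hn⟩, psi, PresentedGroup.toGroup.of, psiGen_of_eq_zero rfl]

lemma psi_s {n i : ℕ} (hi : 2 ≤ i) (hin : i ≤ n) :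
    psi n (s i) = σ (n + i - 1) * σ (n - i + 1) := by
  rw [s, dif_pos ⟨by omega, hin⟩, psi, PresentedGroup.toGroup.of,
    psiGen_of_ne_zero (by simp; omega)]
  congr 2 <;> simp <;> omega

/-- The map sending `s_1 ↦ σ_n` and `s_i ↦ σ_{n+i-1} σ_{n-i+1}` for `i ≥ 2` extends to a
group homomorphism `Ψ : A(B_n) → B_{2n}`. -/
theorem stmt_0 (n : ℕ) (hn : 1 ≤ n) :
    ∃ Ψ : ArtinB n →* BraidGroup (2 * n),
      Ψ (s 1) = σ n ∧
      ∀ i : ℕ, 2 ≤ i → i ≤ n → Ψ (s i) = σ (n + i - 1) * σ (n - i + 1) :=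
  ⟨psi n, psi_s_one hn, fun _ hi hin => psi_s hi hin⟩
end

section
/- Let G be a group with generating set S containing an element Δ such that Δx⁻¹ ∈ S and x⁻¹Δ ∈ S for all x ∈ S. Then every β ∈ G with word length ℓ over S ∪ S⁻¹ using n negative letters in some geodesic expression can also be written as z'_ℓ⁻¹⋯z'_1⁻¹·Δ^{ℓ−n} for some z'_1,…,z'_ℓ ∈ S. -/
/-!
A positive letter `x ∈ S` is rewritten as `x = (Δ * x⁻¹)⁻¹ * Δ`, with `Δ * x⁻¹ ∈ S`. Pushing
each such `Δ` to the right past inverses of elements of `S` conjugates them by `Δ`, and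
`Δ * w * Δ⁻¹ = Δ * (Δ * w⁻¹)⁻¹` stays in `S`. So every expression becomes a product of `ℓ`
inverses of elements of `S` followed by one `Δ` per positive letter, that is `Δ ^ (ℓ - n)`.
-/

section DeltaNormalForm

variable {G : Type*} [Group G] {S : Set G} {Δ : G}

theorem conj_mem_of_mul_inv_mem (hc : ∀ x ∈ S, Δ * x⁻¹ ∈ S) {x : G} (hx : x ∈ S) :
    Δ * x * Δ⁻¹ ∈ S := by
  simpa [mul_assoc] using hc _ (hc x hx)

theorem mul_prod_map_inv (Δ : G) (z : List G) :
    Δ * (z.map (·⁻¹)).prod = ((z.map fun w => Δ * w * Δ⁻¹).map (·⁻¹)).prod * Δ := by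
  have h := map_list_prod (MulAut.conj Δ) (z.map (·⁻¹))
  simp only [MulAut.conj_apply, List.map_map] at h
  rw [← mul_inv_eq_iff_eq_mul, List.map_map]
  simpa [Function.comp_def, mul_assoc] using h

theorem exists_prod_map_inv_mul_pow (hc : ∀ x ∈ S, Δ * x⁻¹ ∈ S) (L : List (G × Bool))
    (hL : ∀ p ∈ L, p.1 ∈ S) :
    ∃ z : List G, z.length = L.length ∧ (∀ w ∈ z, w ∈ S) ∧
      (L.map fun p => if p.2 then p.1 else p.1⁻¹).prod =
        (z.map (·⁻¹)).prod * Δ ^ (L.filter fun p => p.2).length := by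
  induction L with
  | nil => exact ⟨[], rfl, by simp, by simp⟩
  | cons p L ih =>
    obtain ⟨x, b⟩ := p
    have hx : x ∈ S := hL _ List.mem_cons_self
    obtain ⟨z, hzlen, hzS, hprod⟩ := ih fun q hq => hL q (List.mem_cons_of_mem _ hq)
    cases b with
    | false =>
      refine ⟨x :: z, by simp [hzlen], ?_, ?_⟩
      · simpa using ⟨hx, hzS⟩
      · simp [hprod, mul_assoc]
    | true =>
      refine ⟨(Δ * x⁻¹) :: z.map fun w => Δ * w * Δ⁻¹, by simp [hzlen], ?_, ?_⟩
      · simpa using ⟨hc x hx, fun w hw => conj_mem_of_mul_inv_mem hc (hzS w hw)⟩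
      · calc (((x, true) :: L).map fun p => if p.2 then p.1 else p.1⁻¹).prod
            = (Δ * x⁻¹)⁻¹ * (Δ * (z.map (·⁻¹)).prod) *
                Δ ^ (L.filter fun p => p.2).length := by
              simp only [List.map_cons, List.prod_cons, if_true, hprod]
              group
          _ = _ := by
              rw [mul_prod_map_inv]
              simp [pow_succ', mul_assoc]

end DeltaNormalForm

theorem stmt_3_general {G : Type*} [Group G] (S : Set G) (Δ : G)
    (hc1 : ∀ x ∈ S, Δ * x⁻¹ ∈ S)
    (β : G) (ℓ n : ℕ) (L : List (G × Bool)) (hL : ∀ p ∈ L, p.1 ∈ S)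
    (hβ : β = (L.map fun p => if p.2 then p.1 else p.1⁻¹).prod)
    (hlen : L.length = ℓ) (hneg : (L.filter fun p => !p.2).length = n) :
    ∃ z : List G, z.length = ℓ ∧ (∀ w ∈ z, w ∈ S) ∧
      β = (z.map fun w => w⁻¹).prod * Δ ^ ((ℓ : ℤ) - (n : ℤ)) := by
  obtain ⟨z, hzlen, hzS, hprod⟩ := exists_prod_map_inv_mul_pow hc1 L hL
  have hsplit := List.length_eq_length_filter_add (l := L) fun p => p.2
  have hpos : (ℓ : ℤ) - n = (L.filter fun p => p.2).length := by
    omega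
  exact ⟨z, hzlen.trans hlen, hzS, by rw [hpos, zpow_natCast, hβ, hprod]⟩

/-- If `S ∋ Δ` is closed under `x ↦ Δx⁻¹` and `x ↦ x⁻¹Δ`, then any `β` with a geodesic
expression over `S ∪ S⁻¹` of length `ℓ` with `n` negative letters can be written as
`z'_ℓ⁻¹ ⋯ z'_1⁻¹ · Δ^{ℓ-n}` with `z'_i ∈ S`. -/
theorem stmt_3 {G : Type*} [Group G] (S : Set G) (Δ : G)
    (hgen : Subgroup.closure S = ⊤) (hΔ : Δ ∈ S)
    (hc1 : ∀ x ∈ S, Δ * x⁻¹ ∈ S) (hc2 : ∀ x ∈ S, x⁻¹ * Δ ∈ S)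
    (β : G) (ℓ n : ℕ) (L : List (G × Bool)) (hL : ∀ p ∈ L, p.1 ∈ S)
    (hβ : β = (L.map fun p => if p.2 then p.1 else p.1⁻¹).prod)
    (hlen : L.length = ℓ) (hneg : (L.filter fun p => !p.2).length = n)
    (hgeo : ∀ L' : List (G × Bool), (∀ p ∈ L', p.1 ∈ S) →
      β = (L'.map fun p => if p.2 then p.1 else p.1⁻¹).prod → ℓ ≤ L'.length) :
    ∃ z : List G, z.length = ℓ ∧ (∀ w ∈ z, w ∈ S) ∧
      β = (z.map fun w => w⁻¹).prod * Δ ^ ((ℓ : ℤ) - (n : ℤ)) :=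
  stmt_3_general S Δ hc1 β ℓ n L hL hβ hlen hneg
end

section
/- Let G be a group with a generating set S containing Δ, closed under x ↦ Δx⁻¹ and x ↦ x⁻¹Δ, and suppose there are functions L, Smin : G → ℤ such that: (a) L(β) equals the S-positive word length of β whenever β is a product of elements of S, and Smin(β) ≥ 0 in that case; (b) Smin(β) = −(positive length of β⁻¹) and L(β) ≤ 0 whenever β⁻¹ is a product of elements of S; (c) L(βΔ^k) = L(β) + k and Smin(βΔ^k) = Smin(β) + k for all β ∈ G and k ∈ ℤ. Then for every β ∈ G, the word length of β over S ∪ S⁻¹ equals max{L(β), 0} − min{Smin(β), 0}. -/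
/-! Applying `x ↦ x⁻¹ * Δ` twice is conjugation by `Δ⁻¹` (and `x ↦ Δ * x⁻¹` twice is
conjugation by `Δ`), so both conjugations preserve every `S ^ n`. Replacing each inverse letter
`s⁻¹` of a word for `β` by `s⁻¹ * Δ ∈ S` and pushing the extra `Δ`s to the right turns a word of
length `n` with `c` inverse letters into `β * Δ ^ c ∈ S ^ n`; together with (a) and (c) this gives
the lower bound. Similarly `Δ ^ n * x⁻¹` and `x⁻¹ * Δ ^ n` lie in `S ^ n` whenever `x` does, which
with (b) shows that `Smin γ ≥ 0` forces `γ` to be positive. For the upper bound, with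
`b = max (-Smin β) 0` the element `β * Δ ^ b` is positive of length `L β + b`; a shortest word for
it splits into a prefix of length `max (L β) 0` and a rest `u`, and `β` is that prefix times the
inverse of the positive element `Δ ^ b * u⁻¹` of length `b`. -/

/-- The positive word length of `β` over `S`: the least number of factors from `S`
needed to express `β` as a product (junk value `0` if `β` is not such a product). -/
noncomputable def posLen {G : Type*} [Group G] (S : Set G) (β : G) : ℕ :=
  sInf {k | ∃ z : List G, z.length = k ∧ (∀ w ∈ z, w ∈ S) ∧ z.prod = β}

/-- The word length of `β` over `S ∪ S⁻¹`. -/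
noncomputable def wlen {G : Type*} [Group G] (S : Set G) (β : G) : ℕ :=
  sInf {k | ∃ z : List (G × Bool), z.length = k ∧ (∀ p ∈ z, p.1 ∈ S) ∧
    (z.map fun p => if p.2 then p.1 else p.1⁻¹).prod = β}

open Set
open scoped Pointwise

theorem Set.mem_pow_iff_exists_list {M : Type*} [Monoid M] {s : Set M} {n : ℕ} {a : M} :
    a ∈ s ^ n ↔ ∃ l : List M, l.length = n ∧ (∀ x ∈ l, x ∈ s) ∧ l.prod = a := by
  induction n generalizing a with
  | zero => simp [List.length_eq_zero_iff, eq_comm]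
  | succ n ih =>
    rw [pow_succ', mem_mul]
    constructor
    · rintro ⟨x, hx, y, hy, rfl⟩
      obtain ⟨l, hl, hls, rfl⟩ := ih.1 hy
      exact ⟨x :: l, by simp [hl], List.forall_mem_cons.2 ⟨hx, hls⟩, rfl⟩
    · rintro ⟨_ | ⟨x, l⟩, hl, hls, rfl⟩
      · simp at hl
      · simp only [List.mem_cons, forall_eq_or_imp] at hls
        exact ⟨x, hls.1, l.prod, ih.2 ⟨l, by simpa using hl, hls.2, rfl⟩, rfl⟩

theorem Set.exists_list_iff_exists_mem_pow {M : Type*} [Monoid M] {s : Set M} {a : M} :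
    (∃ l : List M, (∀ x ∈ l, x ∈ s) ∧ l.prod = a) ↔ ∃ n, a ∈ s ^ n := by
  simp only [mem_pow_iff_exists_list]
  exact ⟨fun ⟨l, hl⟩ => ⟨l.length, l, rfl, hl⟩, fun ⟨_, l, _, hl⟩ => ⟨l, hl⟩⟩

theorem Set.MapsTo.pow {F M N : Type*} [Monoid M] [Monoid N] [FunLike F M N]
    [MonoidHomClass F M N] {f : F} {s : Set M} {t : Set N} (h : MapsTo f s t) (n : ℕ) :
    MapsTo f (s ^ n) (t ^ n) := by
  rw [mapsTo_iff_image_subset, image_pow]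
  exact pow_subset_pow_left (mapsTo_iff_image_subset.1 h)

section WordLength

variable {G : Type*} [Group G] {S : Set G} {β : G} {n : ℕ}

theorem posLen_eq_sInf : posLen S β = sInf {n | β ∈ S ^ n} := by
  simp only [posLen, mem_pow_iff_exists_list]

theorem posLen_le (h : β ∈ S ^ n) : posLen S β ≤ n := by
  rw [posLen_eq_sInf]
  exact Nat.sInf_le h

theorem mem_pow_posLen (h : ∃ n, β ∈ S ^ n) : β ∈ S ^ posLen S β := by
  rw [posLen_eq_sInf]
  exact Nat.sInf_mem h

theorem wlen_eq_sInf : wlen S β = sInf {n | β ∈ (S ∪ S⁻¹) ^ n} := by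
  classical
  simp only [wlen, mem_pow_iff_exists_list]
  congr 1
  ext n
  constructor
  · rintro ⟨z, rfl, hz, rfl⟩
    refine ⟨_, List.length_map _, ?_, rfl⟩
    simp only [List.mem_map, Prod.exists, forall_exists_index, and_imp]
    rintro _ x (_ | _) hx rfl <;> simp [hz _ hx]
  · rintro ⟨l, rfl, hl, rfl⟩
    refine ⟨l.map fun x => if x ∈ S then (x, true) else (x⁻¹, false), List.length_map _, ?_, ?_⟩
    · simp only [List.mem_map, forall_exists_index, and_imp]
      rintro _ x hx rfl
      split_ifs with hxS
      · exact hxS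
      · simpa [hxS] using hl x hx
    · rw [List.map_map]
      congr 1
      conv_rhs => rw [← List.map_id l]
      refine List.map_congr_left fun x _ => ?_
      by_cases hx : x ∈ S <;> simp [hx]

theorem wlen_le (h : β ∈ (S ∪ S⁻¹) ^ n) : wlen S β ≤ n := by
  rw [wlen_eq_sInf]
  exact Nat.sInf_le h

theorem exists_mem_pow_union_inv (hgen : Subgroup.closure S = ⊤) (β : G) :
    ∃ n, β ∈ (S ∪ S⁻¹) ^ n := by
  have : β ∈ (Subgroup.closure S).toSubmonoid := by simp [hgen]
  rw [Subgroup.closure_toSubmonoid] at this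
  exact exists_list_iff_exists_mem_pow.1 (Submonoid.exists_list_of_mem_closure this)

theorem mem_pow_wlen (hgen : Subgroup.closure S = ⊤) (β : G) :
    β ∈ (S ∪ S⁻¹) ^ wlen S β := by
  rw [wlen_eq_sInf]
  exact Nat.sInf_mem (exists_mem_pow_union_inv hgen β)

end WordLength

section Garside

variable {G : Type*} [Group G] {S : Set G} {Δ x : G} {n : ℕ}

theorem inv_mul_mul_mem_pow (hc2 : ∀ x ∈ S, x⁻¹ * Δ ∈ S) (hx : x ∈ S ^ n) :
    Δ⁻¹ * x * Δ ∈ S ^ n := by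
  have h : MapsTo (MulAut.conj Δ⁻¹) S S := fun y hy => by
    simpa [mul_assoc] using hc2 _ (hc2 y hy)
  simpa using h.pow n hx

theorem mul_mul_inv_mem_pow (hc1 : ∀ x ∈ S, Δ * x⁻¹ ∈ S) (hx : x ∈ S ^ n) :
    Δ * x * Δ⁻¹ ∈ S ^ n := by
  have h : MapsTo (MulAut.conj Δ) S S := fun y hy => by
    simpa [mul_assoc] using hc1 _ (hc1 y hy)
  simpa using h.pow n hx

theorem pow_mul_inv_mem_pow (hc1 : ∀ x ∈ S, Δ * x⁻¹ ∈ S) (hx : x ∈ S ^ n) :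
    Δ ^ n * x⁻¹ ∈ S ^ n := by
  induction n generalizing x with
  | zero => simp_all
  | succ n ih =>
    obtain ⟨s, hs, y, hy, rfl⟩ := (pow_succ' S n ▸ hx : x ∈ S * S ^ n)
    have key : Δ ^ (n + 1) * (s * y)⁻¹ = Δ * (Δ ^ n * y⁻¹) * Δ⁻¹ * (Δ * s⁻¹) := by group
    rw [key, pow_succ]
    exact mul_mem_mul (mul_mul_inv_mem_pow hc1 (ih hy)) (hc1 s hs)

theorem inv_mul_pow_mem_pow (hc2 : ∀ x ∈ S, x⁻¹ * Δ ∈ S) (hx : x ∈ S ^ n) :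
    x⁻¹ * Δ ^ n ∈ S ^ n := by
  induction n generalizing x with
  | zero => simp_all
  | succ n ih =>
    obtain ⟨y, hy, s, hs, rfl⟩ := (pow_succ S n ▸ hx : x ∈ S ^ n * S)
    have key : (y * s)⁻¹ * Δ ^ (n + 1) = s⁻¹ * Δ * (Δ⁻¹ * (y⁻¹ * Δ ^ n) * Δ) := by group
    rw [key, pow_succ']
    exact mul_mem_mul (hc2 s hs) (inv_mul_mul_mem_pow hc2 (ih hy))

theorem exists_mul_pow_mem_pow (hc2 : ∀ x ∈ S, x⁻¹ * Δ ∈ S) (hx : x ∈ (S ∪ S⁻¹) ^ n) :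
    ∃ c ≤ n, x * Δ ^ c ∈ S ^ n := by
  induction n generalizing x with
  | zero => exact ⟨0, le_rfl, by simpa using hx⟩
  | succ n ih =>
    obtain ⟨s, hs, y, hy, rfl⟩ := (pow_succ' (S ∪ S⁻¹) n ▸ hx : x ∈ (S ∪ S⁻¹) * _)
    obtain ⟨c, hcn, hc⟩ := ih hy
    rw [pow_succ']
    rcases hs with hs | hs
    · exact ⟨c, by omega, by simpa [mul_assoc] using mul_mem_mul hs hc⟩
    · refine ⟨c + 1, by omega, ?_⟩
      have key : s * y * Δ ^ (c + 1) = s⁻¹⁻¹ * Δ * (Δ⁻¹ * (y * Δ ^ c) * Δ) := by group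
      rw [key]
      exact mul_mem_mul (hc2 _ hs) (inv_mul_mul_mem_pow hc2 hc)

theorem mul_pow_mem_pow (hΔ : Δ ∈ S) (hx : x ∈ S ^ n) (k : ℕ) : x * Δ ^ k ∈ S ^ (n + k) := by
  rw [pow_add]
  exact mul_mem_mul hx (pow_mem_pow hΔ)

theorem exists_pow_mul_mem_pow (hgen : Subgroup.closure S = ⊤) (hc1 : ∀ x ∈ S, Δ * x⁻¹ ∈ S)
    (hc2 : ∀ x ∈ S, x⁻¹ * Δ ∈ S) (x : G) : ∃ k n, Δ ^ k * x ∈ S ^ n := by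
  obtain ⟨n, hn⟩ := exists_mem_pow_union_inv hgen x⁻¹
  obtain ⟨c, hcn, hc⟩ := exists_mul_pow_mem_pow hc2 hn
  refine ⟨n - c, n, ?_⟩
  have := pow_mul_inv_mem_pow hc1 hc
  rwa [← pow_sub_mul_pow Δ hcn, mul_inv_rev, inv_inv, mul_assoc, mul_inv_cancel_left] at this

end Garside

section LengthFormula

variable {G : Type*} [Group G] {S : Set G} {Δ : G}

theorem exists_mem_pow_of_smin_nonneg (hgen : Subgroup.closure S = ⊤) (hΔ : Δ ∈ S)
    (hc1 : ∀ x ∈ S, Δ * x⁻¹ ∈ S) (hc2 : ∀ x ∈ S, x⁻¹ * Δ ∈ S) {Smin : G → ℤ}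
    (hb : ∀ β : G, (∃ n, β⁻¹ ∈ S ^ n) → Smin β = -(posLen S β⁻¹ : ℤ))
    (hc : ∀ (β : G) (k : ℤ), Smin (β * Δ ^ k) = Smin β + k) {γ : G} (hγ : 0 ≤ Smin γ) :
    ∃ n, γ ∈ S ^ n := by
  obtain ⟨k, n, hkn⟩ := exists_pow_mul_mem_pow hgen hc1 hc2 γ⁻¹
  have hinv : (γ * Δ ^ (-(k : ℤ)))⁻¹ = Δ ^ k * γ⁻¹ := by simp
  set m := posLen S (Δ ^ k * γ⁻¹)
  have hm : (m : ℤ) = k - Smin γ := by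
    have := hb (γ * Δ ^ (-(k : ℤ))) ⟨n, hinv ▸ hkn⟩
    rw [hc, hinv] at this
    omega
  have hmk : m ≤ k := by omega
  have := mul_pow_mem_pow hΔ (inv_mul_pow_mem_pow hc2 (mem_pow_posLen ⟨n, hkn⟩)) (k - m)
  rw [mul_assoc, ← pow_add, Nat.add_sub_cancel' hmk, mul_inv_rev, inv_inv,
    inv_mul_cancel_right] at this
  exact ⟨_, this⟩

theorem max_sub_min_le_wlen (hgen : Subgroup.closure S = ⊤) (hc2 : ∀ x ∈ S, x⁻¹ * Δ ∈ S)
    {L Smin : G → ℤ} (ha : ∀ β : G, (∃ n, β ∈ S ^ n) → L β = posLen S β ∧ 0 ≤ Smin β)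
    (hc : ∀ (β : G) (k : ℤ), L (β * Δ ^ k) = L β + k ∧ Smin (β * Δ ^ k) = Smin β + k)
    (β : G) : max (L β) 0 - min (Smin β) 0 ≤ wlen S β := by
  obtain ⟨c, hcw, hβc⟩ := exists_mul_pow_mem_pow hc2 (mem_pow_wlen hgen β)
  obtain ⟨hL, hSmin⟩ := ha _ ⟨_, hβc⟩
  have hle := posLen_le hβc
  have hshift := hc β c
  rw [zpow_natCast] at hshift
  omega

theorem wlen_le_of_mul_pow_mem_pow (hΔ : Δ ∈ S) (hc1 : ∀ x ∈ S, Δ * x⁻¹ ∈ S) {β : G}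
    {a b t : ℕ} (h : β * Δ ^ b ∈ S ^ t) (hat : a ≤ t) (htb : t ≤ a + b) :
    wlen S β ≤ a + b := by
  have h' : β * Δ ^ b ∈ S ^ a * S ^ (t - a) := by rwa [← pow_add, Nat.add_sub_cancel' hat]
  obtain ⟨y, hy, u, hu, hyu⟩ := h'
  have hw : Δ ^ b * u⁻¹ ∈ S ^ b := by
    have := mul_mem_mul (pow_mem_pow (n := b - (t - a)) hΔ) (pow_mul_inv_mem_pow hc1 hu)
    rwa [← mul_assoc, ← pow_add, ← pow_add, Nat.sub_add_cancel (by omega)] at this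
  have hβ : β = y * (Δ ^ b * u⁻¹)⁻¹ := by
    rw [mul_inv_rev, inv_inv, ← mul_assoc]
    exact eq_mul_inv_of_mul_eq hyu.symm
  rw [hβ]
  apply wlen_le
  rw [pow_add]
  refine mul_mem_mul (pow_subset_pow_left subset_union_left hy)
    (pow_subset_pow_left subset_union_right ?_)
  rw [inv_pow]
  exact inv_mem_inv.2 hw

theorem wlen_le_max_sub_min (hgen : Subgroup.closure S = ⊤) (hΔ : Δ ∈ S)
    (hc1 : ∀ x ∈ S, Δ * x⁻¹ ∈ S) (hc2 : ∀ x ∈ S, x⁻¹ * Δ ∈ S) {L Smin : G → ℤ}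
    (ha : ∀ β : G, (∃ n, β ∈ S ^ n) → L β = posLen S β)
    (hb : ∀ β : G, (∃ n, β⁻¹ ∈ S ^ n) → Smin β = -(posLen S β⁻¹ : ℤ))
    (hc : ∀ (β : G) (k : ℤ), L (β * Δ ^ k) = L β + k ∧ Smin (β * Δ ^ k) = Smin β + k)
    (β : G) : wlen S β ≤ max (L β) 0 - min (Smin β) 0 := by
  have hshift := hc β (-Smin β).toNat
  rw [zpow_natCast] at hshift
  obtain ⟨n, hn⟩ := exists_mem_pow_of_smin_nonneg hgen hΔ hc1 hc2 hb (fun β k => (hc β k).2)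
    (γ := β * Δ ^ (-Smin β).toNat) (by omega)
  have hL := ha _ ⟨n, hn⟩
  have := wlen_le_of_mul_pow_mem_pow hΔ hc1 (mem_pow_posLen ⟨n, hn⟩) (a := (L β).toNat)
    (by omega) (by omega)
  omega

end LengthFormula

/-- Abstract length formula: under the stated hypotheses on `L` and `Smin`, the word length
of every `β` over `S ∪ S⁻¹` equals `max{L(β),0} - min{Smin(β),0}`. -/
theorem stmt_4 {G : Type*} [Group G] (S : Set G) (Δ : G)
    (hgen : Subgroup.closure S = ⊤) (hΔ : Δ ∈ S)
    (hc1 : ∀ x ∈ S, Δ * x⁻¹ ∈ S) (hc2 : ∀ x ∈ S, x⁻¹ * Δ ∈ S)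
    (L Smin : G → ℤ)
    (ha : ∀ β : G, (∃ z : List G, (∀ w ∈ z, w ∈ S) ∧ z.prod = β) →
      L β = (posLen S β : ℤ) ∧ 0 ≤ Smin β)
    (hb : ∀ β : G, (∃ z : List G, (∀ w ∈ z, w ∈ S) ∧ z.prod = β⁻¹) →
      Smin β = -(posLen S β⁻¹ : ℤ) ∧ L β ≤ 0)
    (hc : ∀ (β : G) (k : ℤ), L (β * Δ ^ k) = L β + k ∧ Smin (β * Δ ^ k) = Smin β + k) :
    ∀ β : G, (wlen S β : ℤ) = max (L β) 0 - min (Smin β) 0 := by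
  simp only [exists_list_iff_exists_mem_pow] at ha hb
  intro β
  exact le_antisymm (wlen_le_max_sub_min hgen hΔ hc1 hc2 (fun β h => (ha β h).1)
    (fun β h => (hb β h).1) hc β) (max_sub_min_le_wlen hgen hc2 ha hc β)
end

section
/- Let G be a group and S ⊆ G a generating set containing Δ with x ∈ S ⟹ Δx⁻¹ ∈ S. Then for any x_1,…,x_k ∈ S and any choice of signs, the element x_1^{ε_1}⋯x_k^{ε_k}·Δ^m lies in the set of elements expressible as (product of k elements of S)·Δ^{m−n}, where n is the number of i with ε_i = −1. -/
/-
A negative letter is moved to the right through `x⁻¹ = (x⁻¹ Δ) Δ⁻¹`: the new letter `x⁻¹ Δ` lies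
in `S`, and the leftover `Δ⁻¹` is pushed through the rest of the word by conjugation, which
preserves `S` because `Δ⁻¹ y Δ = (y⁻¹ Δ)⁻¹ Δ`. Each negative letter thus lowers the exponent of
`Δ` by one without changing the word length.
-/

section

variable {G : Type*} [Group G] {S : Set G} {Δ : G}

theorem conj_inv_mem_of_inv_mul_mem (hS : ∀ x ∈ S, x⁻¹ * Δ ∈ S) {y : G} (hy : y ∈ S) :
    MulAut.conj Δ⁻¹ y ∈ S := by
  simpa [mul_assoc] using hS _ (hS y hy)

theorem inv_mul_list_prod (Δ : G) (l : List G) :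
    Δ⁻¹ * l.prod = (l.map (MulAut.conj Δ⁻¹)).prod * Δ⁻¹ := by
  rw [← map_list_prod, MulAut.conj_apply, inv_inv, mul_inv_cancel_right]

theorem exists_inv_mul_list_prod_eq (hS : ∀ x ∈ S, x⁻¹ * Δ ∈ S) {x : G} (hx : x ∈ S)
    {z : List G} (hz : ∀ w ∈ z, w ∈ S) :
    ∃ z' : List G, z'.length = z.length + 1 ∧ (∀ w ∈ z', w ∈ S) ∧
      x⁻¹ * z.prod = z'.prod * Δ⁻¹ := by
  refine ⟨(x⁻¹ * Δ) :: z.map (MulAut.conj Δ⁻¹), by simp, ?_, ?_⟩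
  · simp only [List.mem_cons, List.mem_map]
    rintro w (rfl | ⟨y, hy, rfl⟩)
    exacts [hS x hx, conj_inv_mem_of_inv_mul_mem hS (hz y hy)]
  · rw [List.prod_cons, mul_assoc, ← inv_mul_list_prod, mul_assoc, mul_inv_cancel_left]

end

theorem stmt_15_general {G : Type*} [Group G] (S : Set G) (Δ : G)
    (hc2 : ∀ x ∈ S, x⁻¹ * Δ ∈ S)
    (L : List (G × Bool)) (hL : ∀ p ∈ L, p.1 ∈ S) (m : ℤ) :
    ∃ z : List G, z.length = L.length ∧ (∀ w ∈ z, w ∈ S) ∧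
      (L.map fun p => if p.2 then p.1 else p.1⁻¹).prod * Δ ^ m =
        z.prod * Δ ^ (m - ((L.filter fun p => !p.2).length : ℤ)) := by
  induction L with
  | nil => exact ⟨[], by simp⟩
  | cons p T ih =>
    obtain ⟨x, ε⟩ := p
    have hx : x ∈ S := hL _ List.mem_cons_self
    obtain ⟨z, hlen, hzS, heq⟩ := ih fun q hq => hL q (List.mem_cons_of_mem _ hq)
    simp only [List.map_cons, List.prod_cons, List.filter_cons, List.length_cons, mul_assoc, heq]
    cases ε with
    | true =>
      exact ⟨x :: z, by simp [hlen], List.forall_mem_cons.2 ⟨hx, hzS⟩, (mul_assoc _ _ _).symm⟩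
    | false =>
      obtain ⟨z', hlen', hz'S, hz'⟩ := exists_inv_mul_list_prod_eq hc2 hx hzS
      refine ⟨z', by rw [hlen', hlen], hz'S, ?_⟩
      rw [if_neg Bool.false_ne_true, ← mul_assoc, hz', mul_assoc, ← zpow_neg_one, ← zpow_add]
      simp only [Bool.not_false, if_true, List.length_cons]
      congr 2
      push_cast
      ring

/-- Key rewriting step: for letters `x_1,…,x_k ∈ S` and signs `ε_i`, the element
`x_1^{ε_1} ⋯ x_k^{ε_k} · Δ^m` equals `(product of k elements of S) · Δ^{m-n}`, where
`n` is the number of negative signs. -/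
theorem stmt_15 {G : Type*} [Group G] (S : Set G) (Δ : G)
    (hgen : Subgroup.closure S = ⊤) (hΔ : Δ ∈ S)
    (hc1 : ∀ x ∈ S, Δ * x⁻¹ ∈ S) (hc2 : ∀ x ∈ S, x⁻¹ * Δ ∈ S)
    (L : List (G × Bool)) (hL : ∀ p ∈ L, p.1 ∈ S) (m : ℤ) :
    ∃ z : List G, z.length = L.length ∧ (∀ w ∈ z, w ∈ S) ∧
      (L.map fun p => if p.2 then p.1 else p.1⁻¹).prod * Δ ^ m =
        z.prod * Δ ^ (m - ((L.filter fun p => !p.2).length : ℤ)) :=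
  stmt_15_general S Δ hc2 L hL m
end
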